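/- arXiv:math/9906056 — 2 statements merged into one kernel-verified Lean document; each statement's English description precedes it below -/
import Mathlib

section
/- Let m ≥ 0 and n ≥ 1 be integers and let s ≥ n be a real number. If E ⊆ ℝ^m × ℝ^n satisfies H^s(E) = 0, where H^s is computed with respect to the Euclidean metric on ℝ^{m+n}, then for Lebesgue-almost every y ∈ ℝ^n the slice E_y = { x ∈ ℝ^m : (x, y) ∈ E } satisfies H^{s-n}(E_y) = 0. -/
/-! Cover `E` by sets `c i` of diameter at most `r` with `∑ diam (c i) ^ s` small. For each `y`
the slices of the `c i` cover the slice `E_y` and have diameter at most `diam (c i)`; the slice of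
`c i` is nonempty only for `y` in the projection of `c i`, a set of diameter at most `diam (c i)`,
hence of Lebesgue measure at most `C diam (c i) ^ n`. So `y ↦ H^(s-n)_r (E_y)` is dominated by
a measurable function of integral at most `C ∑ diam (c i) ^ s`, which is arbitrarily small. -/

open MeasureTheory Metric Set Filter
open scoped ENNReal

/-- The size-`r` approximation `H^d_r` of the Hausdorff measure: `μH[d] A = ⨆ r > 0, H^d_r A`. -/
noncomputable def hausdorffPremeasure {X : Type*} [PseudoEMetricSpace X] (d : ℝ) (r : ℝ≥0∞)
    (A : Set X) : ℝ≥0∞ :=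
  ⨅ (c : ℕ → Set X) (_ : A ⊆ ⋃ i, c i) (_ : ∀ i, ediam (c i) ≤ r),
    ∑' i, ⨆ _ : (c i).Nonempty, ediam (c i) ^ d

section Premeasure

variable {X : Type*} [PseudoEMetricSpace X] {d : ℝ} {r : ℝ≥0∞} {A : Set X}

theorem hausdorffPremeasure_le_tsum {c : ℕ → Set X} (hc : A ⊆ ⋃ i, c i)
    (hcr : ∀ i, ediam (c i) ≤ r) :
    hausdorffPremeasure d r A ≤ ∑' i, ⨆ _ : (c i).Nonempty, ediam (c i) ^ d :=
  iInf₂_le_of_le c hc (iInf_le _ hcr)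

theorem exists_cover_of_hausdorffPremeasure_lt {η : ℝ≥0∞} (h : hausdorffPremeasure d r A < η) :
    ∃ c : ℕ → Set X, A ⊆ ⋃ i, c i ∧ (∀ i, ediam (c i) ≤ r) ∧
      ∑' i, ⨆ _ : (c i).Nonempty, ediam (c i) ^ d < η := by
  simpa only [hausdorffPremeasure, iInf_lt_iff, exists_prop] using h

theorem hausdorffPremeasure_antitone (d : ℝ) (A : Set X) :
    Antitone fun r => hausdorffPremeasure d r A := fun _ _ h =>
  le_iInf₂ fun _ hc => le_iInf fun hcr => hausdorffPremeasure_le_tsum hc fun i => (hcr i).trans h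

end Premeasure

theorem hausdorffMeasure_eq_zero_iff_forall_nat {X : Type*} [EMetricSpace X] [MeasurableSpace X]
    [BorelSpace X] {d : ℝ} {A : Set X} :
    μH[d] A = 0 ↔ ∀ k : ℕ, hausdorffPremeasure d ((k : ℝ≥0∞) + 1)⁻¹ A = 0 := by
  simp only [Measure.hausdorffMeasure_apply, ENNReal.iSup_eq_zero]
  refine ⟨fun h k => h _ (by simp), fun h r hr => ?_⟩
  obtain ⟨k, hk⟩ := ENNReal.exists_inv_nat_lt hr.ne'
  have hkr : ((k : ℝ≥0∞) + 1)⁻¹ ≤ r := (ENNReal.inv_le_inv.2 le_self_add).trans hk.le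
  exact le_antisymm ((hausdorffPremeasure_antitone d A hkr).trans (h k).le) zero_le

theorem ae_eq_zero_of_forall_exists_measurable_le {α : Type*} [MeasurableSpace α] {μ : Measure α}
    {f : α → ℝ≥0∞}
    (h : ∀ ε : ℝ≥0∞, 0 < ε → ∃ g : α → ℝ≥0∞, Measurable g ∧ f ≤ g ∧ ∫⁻ a, g a ∂μ ≤ ε) :
    f =ᵐ[μ] 0 := by
  choose g hg hfg hgε using fun k : ℕ =>
    h (k : ℝ≥0∞)⁻¹ (ENNReal.inv_pos.2 (ENNReal.natCast_ne_top k))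
  have hinf : ∫⁻ a, ⨅ k, g k a ∂μ = 0 :=
    le_antisymm (ge_of_tendsto' ENNReal.tendsto_inv_nat_nhds_zero fun k =>
      (lintegral_mono fun a => iInf_le _ k).trans (hgε k)) zero_le
  filter_upwards [(lintegral_eq_zero_iff (Measurable.iInf hg)).1 hinf] with a ha
  exact le_antisymm ((le_iInf fun k => hfg k a).trans ha.le) zero_le

theorem exists_measurableSet_superset_measure_le {Y : Type*} [PseudoEMetricSpace Y]
    [MeasurableSpace Y] [OpensMeasurableSpace Y] {μ : Measure Y} {C : ℝ≥0∞} {t : ℝ}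
    (hμ : ∀ y ρ, ρ ≠ ∞ → μ (closedEBall y ρ) ≤ C * ρ ^ t) {P : Set Y} {ρ : ℝ≥0∞} (hρ : ρ ≠ ∞)
    (hP : ediam P ≤ ρ) : ∃ B, MeasurableSet B ∧ P ⊆ B ∧ μ B ≤ C * ρ ^ t := by
  rcases P.eq_empty_or_nonempty with rfl | ⟨y₀, hy₀⟩
  · exact ⟨∅, .empty, subset_rfl, by simp⟩
  · exact ⟨closedEBall y₀ ρ, isClosed_closedEBall.measurableSet,
      fun y hy => (edist_le_ediam_of_mem hy hy₀).trans hP, hμ y₀ ρ hρ⟩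

section Slicing

variable {X Y : Type*} [PseudoEMetricSpace X] [PseudoEMetricSpace Y]

theorem ediam_slice_le (c : Set (X × Y)) (y : Y) : ediam {x | (x, y) ∈ c} ≤ ediam c :=
  ediam_le fun x hx x' hx' => by
    simpa [Prod.edist_eq] using edist_le_ediam_of_mem (s := c) hx hx'

theorem ediam_image_snd_le (c : Set (X × Y)) : ediam (Prod.snd '' c) ≤ ediam c := by
  simpa using LipschitzWith.prod_snd.ediam_image_le c

variable [MeasurableSpace Y] [OpensMeasurableSpace Y] {μ : Measure Y} {C : ℝ≥0∞} {s t : ℝ}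
  {r : ℝ≥0∞} {E : Set (X × Y)}

theorem exists_measurable_majorant_hausdorffPremeasure_slice
    (hμ : ∀ y ρ, ρ ≠ ∞ → μ (closedEBall y ρ) ≤ C * ρ ^ t) (ht : 0 ≤ t) (hts : t ≤ s)
    (hr : r ≠ ∞) {η : ℝ≥0∞} (hE : hausdorffPremeasure s r E < η) :
    ∃ g : Y → ℝ≥0∞, Measurable g ∧
      (fun y => hausdorffPremeasure (s - t) r {x | (x, y) ∈ E}) ≤ g ∧ ∫⁻ y, g y ∂μ ≤ C * η := by
  obtain ⟨c, hEc, hcr, hsum⟩ := exists_cover_of_hausdorffPremeasure_lt hE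
  choose B hB hcB hμB using fun i => exists_measurableSet_superset_measure_le hμ
    ((hcr i).trans_lt hr.lt_top).ne (ediam_image_snd_le (c i))
  set w : ℕ → ℝ≥0∞ := fun i => ⨆ _ : (c i).Nonempty, ediam (c i) ^ (s - t)
  refine ⟨fun y => ∑' i, (B i).indicator (fun _ => w i) y,
    Measurable.tsum fun i => measurable_const.indicator (hB i), fun y => ?_, ?_⟩
  · have hcover : {x | (x, y) ∈ E} ⊆ ⋃ i, {x | (x, y) ∈ c i} := fun x hx => by
      simpa using hEc hx
    refine (hausdorffPremeasure_le_tsum hcover fun i => (ediam_slice_le _ y).trans (hcr i)).trans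
      (ENNReal.tsum_le_tsum fun i => iSup_le fun ⟨x, hx⟩ => ?_)
    rw [indicator_of_mem (hcB i ⟨(x, y), hx, rfl⟩)]
    exact le_iSup_of_le (⟨(x, y), hx⟩ : (c i).Nonempty)
      (ENNReal.rpow_le_rpow (ediam_slice_le _ y) (sub_nonneg.2 hts))
  · have hterm : ∀ i, w i * μ (B i) ≤ C * ⨆ _ : (c i).Nonempty, ediam (c i) ^ s := fun i => by
      by_cases hne : (c i).Nonempty
      · simp only [w, iSup_pos hne]
        calc ediam (c i) ^ (s - t) * μ (B i)
            ≤ ediam (c i) ^ (s - t) * (C * ediam (c i) ^ t) := by gcongr; exact hμB i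
          _ = C * ediam (c i) ^ s := by
              rw [mul_left_comm, ← ENNReal.rpow_add_of_nonneg _ _ (sub_nonneg.2 hts) ht,
                sub_add_cancel]
      · simp [w, hne]
    calc ∫⁻ y, ∑' i, (B i).indicator (fun _ => w i) y ∂μ = ∑' i, w i * μ (B i) := by
          rw [lintegral_tsum fun i => (measurable_const.indicator (hB i)).aemeasurable]
          simp only [lintegral_indicator_const (hB _)]
      _ ≤ ∑' i, C * ⨆ _ : (c i).Nonempty, ediam (c i) ^ s := ENNReal.tsum_le_tsum hterm
      _ ≤ C * η := by rw [ENNReal.tsum_mul_left]; gcongr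

theorem ae_hausdorffPremeasure_slice_eq_zero
    (hμ : ∀ y ρ, ρ ≠ ∞ → μ (closedEBall y ρ) ≤ C * ρ ^ t) (hC : C ≠ ∞) (ht : 0 ≤ t)
    (hts : t ≤ s) (hr : r ≠ ∞) (hE : hausdorffPremeasure s r E = 0) :
    ∀ᵐ y ∂μ, hausdorffPremeasure (s - t) r {x | (x, y) ∈ E} = 0 :=
  ae_eq_zero_of_forall_exists_measurable_le fun ε hε => by
    obtain ⟨g, hg, hle, hint⟩ := exists_measurable_majorant_hausdorffPremeasure_slice hμ ht hts hr
      (hE ▸ ENNReal.div_pos hε.ne' hC : hausdorffPremeasure s r E < ε / C)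
    exact ⟨g, hg, hle, hint.trans ENNReal.mul_div_le⟩

end Slicing

theorem ae_hausdorffMeasure_slice_eq_zero {X Y : Type*} [EMetricSpace X] [MeasurableSpace X]
    [BorelSpace X] [EMetricSpace Y] [MeasurableSpace Y] [BorelSpace Y]
    [SecondCountableTopologyEither X Y] {μ : Measure Y} {C : ℝ≥0∞} {s t : ℝ}
    (hμ : ∀ y ρ, ρ ≠ ∞ → μ (closedEBall y ρ) ≤ C * ρ ^ t) (hC : C ≠ ∞) (ht : 0 ≤ t)
    (hts : t ≤ s) {E : Set (X × Y)} (hE : μH[s] E = 0) :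
    ∀ᵐ y ∂μ, μH[s - t] {x | (x, y) ∈ E} = 0 := by
  simp only [hausdorffMeasure_eq_zero_iff_forall_nat, ae_all_iff] at hE ⊢
  exact fun k => ae_hausdorffPremeasure_slice_eq_zero hμ hC ht hts (by simp) (hE k)

theorem addHaar_closedEBall {E : Type*} [NormedAddCommGroup E] [NormedSpace ℝ E]
    [MeasurableSpace E] [BorelSpace E] [FiniteDimensional ℝ E] (μ : Measure E)
    [μ.IsAddHaarMeasure] (x : E) {ρ : ℝ≥0∞} (hρ : ρ ≠ ∞) :
    μ (closedEBall x ρ) = μ (closedBall 0 1) * ρ ^ (Module.finrank ℝ E : ℝ) := by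
  rw [← ENNReal.ofReal_toReal hρ, closedEBall_ofReal ENNReal.toReal_nonneg,
    Measure.addHaar_closedBall' μ x ENNReal.toReal_nonneg, mul_comm, ENNReal.rpow_natCast,
    ENNReal.ofReal_pow ENNReal.toReal_nonneg]

theorem sq_dist_toLp_append (m n : ℕ) (x x' : EuclideanSpace ℝ (Fin m))
    (y y' : EuclideanSpace ℝ (Fin n)) :
    dist (WithLp.toLp 2 (Fin.append x y) : EuclideanSpace ℝ (Fin (m + n)))
      (WithLp.toLp 2 (Fin.append x' y')) ^ 2 = dist x x' ^ 2 + dist y y' ^ 2 := by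
  simp only [EuclideanSpace.dist_eq, Fin.sum_univ_add, Fin.append_left, Fin.append_right]
  rw [Real.sq_sqrt (by positivity), Real.sq_sqrt (by positivity), Real.sq_sqrt (by positivity)]

theorem antilipschitzWith_one_toLp_append (m n : ℕ) :
    AntilipschitzWith 1 fun p : EuclideanSpace ℝ (Fin m) × EuclideanSpace ℝ (Fin n) =>
      (WithLp.toLp 2 (Fin.append p.1 p.2) : EuclideanSpace ℝ (Fin (m + n))) := by
  refine AntilipschitzWith.of_le_mul_dist fun p q => ?_
  have h := sq_dist_toLp_append m n p.1 q.1 p.2 q.2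
  rw [NNReal.coe_one, one_mul, Prod.dist_eq]
  refine max_le ?_ ?_ <;>
    refine (pow_le_pow_iff_left₀ dist_nonneg dist_nonneg two_ne_zero).1 ?_ <;>
    nlinarith [sq_nonneg (dist p.1 q.1), sq_nonneg (dist p.2 q.2)]

theorem stmt_1_general (m n : ℕ) (s : ℝ) (hs : (n : ℝ) ≤ s)
    (E : Set (EuclideanSpace ℝ (Fin (m + n))))
    (hE : μH[s] E = 0) :
    ∀ᵐ y : EuclideanSpace ℝ (Fin n) ∂volume,
      μH[s - n] {x : EuclideanSpace ℝ (Fin m) |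
        (WithLp.toLp 2 (Fin.append x y) : EuclideanSpace ℝ (Fin (m + n))) ∈ E} = 0 := by
  have hE' := (antilipschitzWith_one_toLp_append m n).hausdorffMeasure_preimage_le
    (n.cast_nonneg.trans hs) E
  rw [hE, mul_zero, nonpos_iff_eq_zero] at hE'
  have hball : ∀ (y : EuclideanSpace ℝ (Fin n)) ρ, ρ ≠ ∞ → volume (closedEBall y ρ) ≤
      volume (closedBall (0 : EuclideanSpace ℝ (Fin n)) 1) * ρ ^ (n : ℝ) := fun y ρ hρ => by
    rw [addHaar_closedEBall volume y hρ, finrank_euclideanSpace_fin]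
  exact (ae_hausdorffMeasure_slice_eq_zero hball measure_closedBall_lt_top.ne n.cast_nonneg hs
    hE' :)

theorem stmt_1 (m n : ℕ) (hn : 1 ≤ n) (s : ℝ) (hs : (n : ℝ) ≤ s)
    (E : Set (EuclideanSpace ℝ (Fin (m + n))))
    (hE : μH[s] E = 0) :
    ∀ᵐ y : EuclideanSpace ℝ (Fin n) ∂volume,
      μH[s - n] {x : EuclideanSpace ℝ (Fin m) |
        (WithLp.toLp 2 (Fin.append x y) : EuclideanSpace ℝ (Fin (m + n))) ∈ E} = 0 :=
  stmt_1_general m n s hs E hE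
end

section
/- Let N ≥ 1, let D ⊆ ℂ^N be open, and let E ⊆ D be closed in D with H^{2N-2}(E) = 0, the Hausdorff measure computed with respect to the Euclidean metric on ℂ^N ≅ ℝ^{2N}. Then every function f holomorphic on D \ E extends holomorphically to D: there exists g holomorphic on D with g = f on D \ E. -/
open MeasureTheory

noncomputable instance (n : ℕ) : MeasurableSpace (EuclideanSpace ℂ (Fin n)) := borel _
instance (n : ℕ) : BorelSpace (EuclideanSpace ℂ (Fin n)) := ⟨rfl⟩

/-!
Near a point `p ∈ E`, almost every complex line through `p` meets `E` only at `p`: the map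
sending `x` to the direction of the line through `p` and `x`, read in an affine chart of the
`(2N - 2)`-dimensional space of directions, is locally Lipschitz, so the directions of lines
hitting `E \ {p}` form a null set. In linear coordinates `(w, z) ∈ ℂ × ℂ^(N-1)` centred at `p`
in which such a line is the `w`-axis, a circle `|w| = r` and hence a thin tube around it avoid
`E`, and the Cauchy integral over `|w| = r` is holomorphic on a small polydisc. It agrees with `f`
on every slice `z = const` that misses `E`; the projection of `E` to the `z`-coordinates is null,
so such slices are dense, and the Cauchy integral extends `f` near `p`. As `E` has empty
interior, these local extensions patch together.
-/

open Metric Set Filter Module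
open scoped Topology NNReal ENNReal

theorem hausdorffMeasure_image_eq_zero_of_locally_lipschitzOn {X Y : Type*} [MetricSpace X]
    [MeasurableSpace X] [BorelSpace X] [SecondCountableTopology X] [MetricSpace Y]
    [MeasurableSpace Y] [BorelSpace Y] {f : X → Y} {s : Set X} {d : ℝ} (hd : 0 ≤ d)
    (hf : ∀ x ∈ s, ∃ C : ℝ≥0, ∃ t ∈ 𝓝[s] x, LipschitzOnWith C f t) (hs : μH[d] s = 0) :
    μH[d] (f '' s) = 0 := by
  choose! C t htn hC using hf
  obtain ⟨u, hus, huc, huU⟩ := TopologicalSpace.countable_cover_nhdsWithin htn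
  replace huU := inter_eq_self_of_subset_left huU
  rw [inter_iUnion₂] at huU
  rw [← huU, image_iUnion₂, measure_biUnion_null_iff huc]
  intro x hx
  refine le_antisymm ?_ zero_le
  calc μH[d] (f '' (s ∩ t x)) ≤ (C x : ℝ≥0∞) ^ d * μH[d] (s ∩ t x) :=
        ((hC x (hus hx)).mono inter_subset_right).hausdorffMeasure_image_le hd
    _ = 0 := by rw [measure_mono_null inter_subset_left hs, mul_zero]

theorem interior_eq_empty_of_hausdorffMeasure_eq_zero {E : Type*} [NormedAddCommGroup E]
    [NormedSpace ℝ E] [FiniteDimensional ℝ E] [MeasurableSpace E] [BorelSpace E] {d : ℝ}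
    (hd : d ≤ finrank ℝ E) {s : Set E} (hs : μH[d] s = 0) : interior s = ∅ := by
  refine isOpen_interior.measure_eq_zero_iff (μ := μH[finrank ℝ E]) |>.1 ?_
  exact measure_mono_null interior_subset <|
    nonpos_iff_eq_zero.1 (hs ▸ Measure.hausdorffMeasure_mono hd s)

theorem interior_image_eq_empty_of_hausdorffMeasure_eq_zero {V Y : Type*} [NormedAddCommGroup V]
    [NormedSpace ℂ V] [MeasurableSpace V] [BorelSpace V] [SecondCountableTopology V]
    [NormedAddCommGroup Y] [NormedSpace ℂ Y] [FiniteDimensional ℂ Y] [MeasurableSpace Y]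
    [BorelSpace Y] {f : V → Y} {s : Set V} (hf : ∀ x ∈ s, ContDiffAt ℂ 1 f x)
    (hs : μH[finrank ℝ Y] s = 0) : interior (f '' s) = ∅ := by
  refine interior_eq_empty_of_hausdorffMeasure_eq_zero le_rfl
    (hausdorffMeasure_image_eq_zero_of_locally_lipschitzOn (Nat.cast_nonneg _) (fun x hx => ?_) hs)
  obtain ⟨C, t, ht, hC⟩ := (hf x hx).exists_lipschitzOnWith
  exact ⟨C, t, nhdsWithin_le_nhds ht, hC⟩

theorem exists_chart_of_hausdorffMeasure_eq_zero {V X : Type*} [NormedAddCommGroup V]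
    [NormedSpace ℂ V] [MeasurableSpace V] [BorelSpace V] [SecondCountableTopology V]
    [NormedAddCommGroup X] [NormedSpace ℂ X] [FiniteDimensional ℂ X] [MeasurableSpace X]
    [BorelSpace X] (e : V ≃L[ℂ] ℂ × X) {S : Set V} (hS : μH[finrank ℝ X] S = 0) (p : V) :
    ∃ L : V ≃L[ℂ] ℂ × X, (∀ w : ℂ, w ≠ 0 → p + L.symm (w, 0) ∉ S) ∧
      interior ((fun x => (L (x - p)).2) '' S) = ∅ := by
  let A := S ∩ {x | (e (x - p)).1 ≠ 0}
  -- in `e`-coordinates centred at `p`, `x ∈ A` lies on the line `w ↦ (w, w • β x)`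
  let β : V → X := fun x => (e (x - p)).1⁻¹ • (e (x - p)).2
  have hβ : interior (β '' A) = ∅ := by
    refine interior_image_eq_empty_of_hausdorffMeasure_eq_zero (fun x hx => ?_)
      (measure_mono_null inter_subset_left hS)
    have he : ContDiff ℂ 1 fun x => e (x - p) := e.contDiff.comp (contDiff_id.sub contDiff_const)
    exact (he.fst.contDiffAt.inv hx.2).smul he.snd.contDiffAt
  obtain ⟨c, hc⟩ : (β '' A)ᶜ.Nonempty := by
    rw [nonempty_compl]
    rintro h
    rw [h, interior_univ] at hβ
    exact univ_nonempty.ne_empty hβ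
  -- the shear `(w, z) ↦ (w, z - w • c)` moves the line `w ↦ (w, w • c)` to the `w`-axis
  let L := e.trans ((ContinuousLinearEquiv.refl ℂ ℂ).skewProd (ContinuousLinearEquiv.refl ℂ X)
    (-ContinuousLinearMap.toSpanSingleton ℂ c))
  refine ⟨L, fun w hw hmem => hc ⟨_, ⟨hmem, ?_⟩, ?_⟩, ?_⟩
  · simpa [L] using hw
  · simp [β, L, smul_smul, inv_mul_cancel₀ hw]
  · refine interior_image_eq_empty_of_hausdorffMeasure_eq_zero (fun x _ => ?_) hS
    exact (L.contDiff.comp (contDiff_id.sub contDiff_const)).snd.contDiffAt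

section ParametricHolomorphy

variable {α : Type*} [MeasurableSpace α] {μ : Measure α}

theorem aestronglyMeasurable_of_forall_clm_apply {𝕜 H F : Type*} [RCLike 𝕜]
    [NormedAddCommGroup H] [NormedSpace 𝕜 H] [FiniteDimensional 𝕜 H] [NormedAddCommGroup F]
    [NormedSpace 𝕜 F] {f : α → H →L[𝕜] F} (hf : ∀ v, AEStronglyMeasurable (f · v) μ) :
    AEStronglyMeasurable f μ := by
  let b := Module.finBasis 𝕜 H
  let coord : Fin (finrank 𝕜 H) → H →L[𝕜] 𝕜 := fun j =>
    LinearMap.toContinuousLinearMap (b.coord j)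
  have hsum : f = fun a => ∑ j, (coord j).smulRight (f a (b j)) := by
    ext a v
    conv_lhs => rw [← b.sum_repr v, map_sum]
    simp [coord]
  rw [hsum]
  exact Finset.aestronglyMeasurable_fun_sum _ fun j _ =>
    (ContinuousLinearMap.smulRightL 𝕜 H F (coord j)).continuous.comp_aestronglyMeasurable (hf _)

theorem aestronglyMeasurable_fderiv_with_param {𝕜 H F : Type*} [RCLike 𝕜]
    [NormedAddCommGroup H] [NormedSpace 𝕜 H] [FiniteDimensional 𝕜 H] [NormedAddCommGroup F]
    [NormedSpace 𝕜 F] {f : H → α → F} {x₀ : H} (hmeas : ∀ᶠ x in 𝓝 x₀, AEStronglyMeasurable (f x) μ)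
    (hdiff : ∀ a, DifferentiableAt 𝕜 (f · a) x₀) :
    AEStronglyMeasurable (fun a => fderiv 𝕜 (f · a) x₀) μ := by
  refine aestronglyMeasurable_of_forall_clm_apply fun v => ?_
  have hpts : Tendsto (fun n : ℕ => x₀ + (n : 𝕜)⁻¹ • v) atTop (𝓝 x₀) := by
    simpa using tendsto_const_nhds.add ((tendsto_inv_atTop_nhds_zero_nat (𝕜 := 𝕜)).smul_const v)
  obtain ⟨N, hN⟩ := eventually_atTop.1 (hpts.eventually hmeas)
  let c : ℕ → 𝕜 := fun n => ((n + N : ℕ) : 𝕜)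
  have hc : Tendsto (fun n => ‖c n‖) atTop atTop := by
    simp only [c, RCLike.norm_natCast]
    exact tendsto_natCast_atTop_atTop.comp (tendsto_add_atTop_nat N)
  refine aestronglyMeasurable_of_tendsto_ae atTop (fun n => ?_)
    (ae_of_all _ fun a => (hdiff a).hasFDerivAt.lim v hc)
  exact ((hN (n + N) le_add_self).sub (hmeas.self_of_nhds)).const_smul _

theorem differentiableOn_integral_of_norm_le [IsFiniteMeasure μ] {H : Type*}
    [NormedAddCommGroup H] [NormedSpace ℂ H] [FiniteDimensional ℂ H]
    {E : Type*} [NormedAddCommGroup E] [NormedSpace ℂ E] [CompleteSpace E]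
    {f : H → α → E} {s : Set H} {M : ℝ} (hs : IsOpen s)
    (hmeas : ∀ x ∈ s, AEStronglyMeasurable (f x) μ) (hdiff : ∀ a, DifferentiableOn ℂ (f · a) s)
    (hbound : ∀ a, ∀ x ∈ s, ‖f x a‖ ≤ M) :
    DifferentiableOn ℂ (fun x => ∫ a, f x a ∂μ) s := by
  intro x₀ hx₀
  obtain ⟨ε, hε, hεs⟩ := Metric.isOpen_iff.1 hs x₀ hx₀
  have hball : ∀ x ∈ ball x₀ (ε / 2), ball x (ε / 2) ⊆ s := fun x hx =>
    (ball_subset_ball' (by rw [mem_ball] at hx; linarith)).trans hεs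
  -- Cauchy estimate, in the form of the Schwarz lemma
  have hfderiv : ∀ a, ∀ x ∈ ball x₀ (ε / 2), ‖fderiv ℂ (f · a) x‖ ≤ 2 * M / (ε / 2) := by
    intro a x hx
    refine Complex.norm_fderiv_le_div_of_mapsTo_ball ((hdiff a).mono (hball x hx))
      (fun z hz => ?_) (by positivity)
    rw [mem_closedBall, dist_eq_norm]
    have hxs : x ∈ s := hball x hx (mem_ball_self (by positivity))
    linarith [norm_sub_le (f z a) (f x a), hbound a z (hball x hx hz), hbound a x hxs]
  have hdiffAt : ∀ a, ∀ x ∈ ball x₀ (ε / 2), DifferentiableAt ℂ (f · a) x := fun a x hx =>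
    (hdiff a).differentiableAt (hs.mem_nhds (hball x hx (mem_ball_self (by positivity))))
  have hmeas₀ : ∀ᶠ x in 𝓝 x₀, AEStronglyMeasurable (f x) μ :=
    eventually_of_mem (hs.mem_nhds hx₀) hmeas
  have hcenter : x₀ ∈ ball x₀ (ε / 2) := mem_ball_self (half_pos hε)
  have hderiv := hasFDerivAt_integral_of_dominated_of_fderiv_le
    (ball_mem_nhds x₀ (half_pos hε)) hmeas₀
    ⟨hmeas x₀ hx₀, .of_bounded (ae_of_all _ fun a => hbound a x₀ hx₀)⟩
    (aestronglyMeasurable_fderiv_with_param hmeas₀ fun a => hdiffAt a x₀ hcenter)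
    (ae_of_all _ hfderiv) (integrable_const _)
    (ae_of_all _ fun a x hx => (hdiffAt a x hx).hasFDerivAt)
  exact hderiv.differentiableAt.differentiableWithinAt

end ParametricHolomorphy

section CauchyTransform

open Complex Real

variable {X E : Type*} [NormedAddCommGroup X] [NormedSpace ℂ X]
  [NormedAddCommGroup E] [NormedSpace ℂ E] [CompleteSpace E]

noncomputable def cauchyTransform (r : ℝ) (F : ℂ × X → E) (y : ℂ × X) : E :=
  (2 * π * I : ℂ)⁻¹ • ∮ w in C(0, r), (w - y.1)⁻¹ • F (w, y.2)

theorem cauchyTransform_eq {r : ℝ} {F : ℂ × X → E} {y : ℂ × X} (hy : y.1 ∈ ball (0 : ℂ) r)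
    (hF : ∀ w ∈ closedBall (0 : ℂ) r, DifferentiableAt ℂ F (w, y.2)) :
    cauchyTransform r F y = F y :=
  have hslice : ∀ w ∈ closedBall (0 : ℂ) r, DifferentiableAt ℂ (fun w => F (w, y.2)) w :=
    fun w hw => (hF w hw).comp w (differentiableAt_id.prodMk (differentiableAt_const _))
  two_pi_I_inv_smul_circleIntegral_sub_inv_smul_of_differentiable_on_off_countable
    countable_empty hy (fun w hw => (hslice w hw).continuousAt.continuousWithinAt)
    fun w hw => hslice w (ball_subset_closedBall hw.1)

theorem differentiableOn_cauchyTransform [FiniteDimensional ℂ X] {r δ : ℝ} {F : ℂ × X → E}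
    (hF : ∀ z ∈ sphere (0 : ℂ) r ×ˢ closedBall (0 : X) δ, DifferentiableAt ℂ F z) :
    DifferentiableOn ℂ (cauchyTransform r F) (ball 0 r ×ˢ ball 0 δ) := by
  rintro y₀ ⟨hy₀₁, hy₀₂⟩
  obtain ⟨ρ, hy₀ρ, hρr⟩ := exists_between (mem_ball_zero_iff.1 hy₀₁)
  have hr : 0 < r := (norm_nonneg _).trans_lt (hy₀ρ.trans hρr)
  obtain ⟨M, hM⟩ := (isCompact_sphere (0 : ℂ) r).prod (isCompact_closedBall (0 : X) δ)
    |>.exists_bound_of_continuousOn fun z hz => (hF z hz).continuousAt.continuousWithinAt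
  have hcircle : ∀ θ, circleMap 0 r θ ∈ sphere (0 : ℂ) r := circleMap_mem_sphere 0 hr.le
  let s : Set (ℂ × X) := ball 0 ρ ×ˢ ball 0 δ
  have hFs : ∀ θ, ∀ y ∈ s, DifferentiableAt ℂ F (circleMap 0 r θ, y.2) := fun θ y hy =>
    hF _ ⟨hcircle θ, ball_subset_closedBall hy.2⟩
  have hgap : ∀ θ, ∀ y ∈ s, r - ρ ≤ ‖circleMap 0 r θ - y.1‖ := fun θ y hy => by
    have := norm_sub_norm_le (circleMap 0 r θ) y.1
    rw [norm_circleMap_zero, abs_of_pos hr] at this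
    linarith [mem_ball_zero_iff.1 hy.1]
  have hne : ∀ θ, ∀ y ∈ s, circleMap 0 r θ - y.1 ≠ 0 := fun θ y hy =>
    norm_pos_iff.1 ((sub_pos.2 hρr).trans_le (hgap θ y hy))
  let g : ℂ × X → ℝ → E := fun y θ =>
    deriv (circleMap 0 r) θ • ((circleMap 0 r θ - y.1)⁻¹ • F (circleMap 0 r θ, y.2))
  have hcauchy : cauchyTransform r F =
      fun y => (2 * π * I : ℂ)⁻¹ • ∫ θ, g y θ ∂volume.restrict (Ioc 0 (2 * π)) := by
    ext y
    rw [cauchyTransform, circleIntegral, intervalIntegral.integral_of_le (by positivity)]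
  have hs : IsOpen s := isOpen_ball.prod isOpen_ball
  have hint : DifferentiableOn ℂ (fun y => ∫ θ, g y θ ∂volume.restrict (Ioc 0 (2 * π))) s := by
    refine differentiableOn_integral_of_norm_le (M := r * ((r - ρ)⁻¹ * M)) hs
      (fun y hy => Continuous.aestronglyMeasurable ?_) (fun θ y hy => ?_) (fun θ y hy => ?_)
    · simp only [g, deriv_circleMap]
      exact ((continuous_circleMap 0 r).mul continuous_const).smul
        ((((continuous_circleMap 0 r).sub continuous_const).inv₀ fun θ => hne θ y hy).smul
          (continuous_iff_continuousAt.2 fun θ => ContinuousAt.comp (g := F)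
            (f := fun θ => (circleMap 0 r θ, y.2)) (hFs θ y hy).continuousAt
            ((continuous_circleMap 0 r).prodMk continuous_const).continuousAt))
    · have hkernel : DifferentiableAt ℂ (fun y : ℂ × X => (circleMap 0 r θ - y.1)⁻¹) y :=
        ((differentiableAt_const _).sub differentiableAt_fst).inv (hne θ y hy)
      have hslice : DifferentiableAt ℂ (fun y : ℂ × X => F (circleMap 0 r θ, y.2)) y :=
        (hFs θ y hy).comp y ((differentiableAt_const _).prodMk differentiableAt_snd)
      exact ((hkernel.smul hslice).const_smul _).differentiableWithinAt
    · rw [norm_smul, norm_smul, norm_inv, deriv_circleMap, norm_mul, norm_circleMap_zero,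
        abs_of_pos hr, norm_I, mul_one]
      gcongr
      · exact hgap θ y hy
      · exact hM _ ⟨hcircle θ, ball_subset_closedBall hy.2⟩
  rw [hcauchy]
  exact ((hint.const_smul _).differentiableAt
    (hs.mem_nhds ⟨mem_ball_zero_iff.2 hy₀ρ, hy₀₂⟩)).differentiableWithinAt

end CauchyTransform

theorem exists_local_extension_at_origin {X E : Type*} [NormedAddCommGroup X]
    [NormedSpace ℂ X] [FiniteDimensional ℂ X] [NormedAddCommGroup E] [NormedSpace ℂ E]
    [CompleteSpace E] {Ω K : Set (ℂ × X)} {F : ℂ × X → E} (hΩ : Ω ∈ 𝓝 0)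
    (hΩK : IsOpen (Ω \ K)) (hF : DifferentiableOn ℂ F (Ω \ K))
    (haxis : ∀ w : ℂ, w ≠ 0 → (w, (0 : X)) ∉ K) (hK : interior (Prod.snd '' K) = ∅) :
    ∃ U, IsOpen U ∧ (0 : ℂ × X) ∈ U ∧ ∃ G, DifferentiableOn ℂ G U ∧ EqOn G F (U \ K) := by
  rw [← Prod.mk_zero_zero, mem_nhds_prod_iff] at hΩ
  obtain ⟨a, ha, b, hb, habΩ⟩ := hΩ
  obtain ⟨r, hr, hra⟩ := nhds_basis_closedBall.mem_iff.1 ha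
  have hcircle : sphere (0 : ℂ) r ×ˢ {(0 : X)} ⊆ Ω \ K := by
    rintro ⟨w, z⟩ ⟨hw, rfl⟩
    refine ⟨habΩ ⟨hra (sphere_subset_closedBall hw), mem_of_mem_nhds hb⟩, haxis w ?_⟩
    rintro rfl
    exact hr.ne (by simpa using hw)
  obtain ⟨u, v, -, hv, hsu, h0v, huv⟩ :=
    generalized_tube_lemma (isCompact_sphere 0 r) isCompact_singleton hΩK hcircle
  obtain ⟨δ, hδ, hδbv⟩ := nhds_basis_closedBall.mem_iff.1
    (inter_mem hb (hv.mem_nhds (h0v rfl)))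
  have hdisc : closedBall (0 : ℂ) r ×ˢ closedBall (0 : X) δ ⊆ Ω :=
    fun z hz => habΩ ⟨hra hz.1, (hδbv hz.2).1⟩
  have hdiffAt : ∀ z ∈ Ω \ K, DifferentiableAt ℂ F z := fun z hz =>
    hF.differentiableAt (hΩK.mem_nhds hz)
  let U := ball (0 : ℂ) r ×ˢ ball (0 : X) δ
  have hUΩ : U ⊆ Ω := fun z hz => hdisc ⟨ball_subset_closedBall hz.1, ball_subset_closedBall hz.2⟩
  have hUK : IsOpen (U \ K) := by
    rw [← inter_eq_left.2 hUΩ, inter_sdiff_assoc]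
    exact (isOpen_ball.prod isOpen_ball).inter hΩK
  have hG : DifferentiableOn ℂ (cauchyTransform r F) U :=
    differentiableOn_cauchyTransform fun z hz => hdiffAt z (huv ⟨hsu hz.1, (hδbv hz.2).2⟩)
  refine ⟨U, isOpen_ball.prod isOpen_ball, ⟨mem_ball_self hr, mem_ball_self hδ⟩, _, hG, ?_⟩
  have hgood : EqOn (cauchyTransform r F) F ((U \ K) ∩ (Prod.snd ⁻¹' (Prod.snd '' K))ᶜ) := by
    rintro y ⟨⟨hyU, -⟩, hy⟩
    refine cauchyTransform_eq hyU.1 fun w hw => hdiffAt _ ⟨?_, fun hK => hy ⟨_, hK, rfl⟩⟩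
    exact hdisc ⟨hw, ball_subset_closedBall hyU.2⟩
  have hdense : Dense (Prod.snd ⁻¹' (Prod.snd '' K))ᶜ :=
    (interior_eq_empty_iff_dense_compl.1 hK).preimage (isOpenMap_snd (X := ℂ))
  exact hgood.of_subset_closure (hG.continuousOn.mono sdiff_subset)
    (hF.continuousOn.mono fun z hz => ⟨hUΩ hz.1, hz.2⟩) inter_subset_left
    (hdense.open_subset_closure_inter hUK)

theorem exists_local_extension_of_chart {V X E : Type*} [NormedAddCommGroup V] [NormedSpace ℂ V]
    [NormedAddCommGroup X] [NormedSpace ℂ X] [FiniteDimensional ℂ X] [NormedAddCommGroup E]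
    [NormedSpace ℂ E] [CompleteSpace E] (L : V ≃L[ℂ] ℂ × X) {D S : Set V} {f : V → E} {p : V}
    (hD : D ∈ 𝓝 p) (hDS : IsOpen (D \ S)) (hf : DifferentiableOn ℂ f (D \ S))
    (hline : ∀ w : ℂ, w ≠ 0 → p + L.symm (w, 0) ∉ S)
    (hproj : interior ((fun x => (L (x - p)).2) '' S) = ∅) :
    ∃ U, IsOpen U ∧ p ∈ U ∧ ∃ G, DifferentiableOn ℂ G U ∧ EqOn G f (U \ S) := by
  let φ : ℂ × X → V := fun y => p + L.symm y
  let ψ : V → ℂ × X := fun x => L (x - p)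
  have hφψ : ∀ x, φ (ψ x) = x := fun x => by simp [φ, ψ]
  have hφ : Differentiable ℂ φ := (L.symm.differentiable).const_add p
  have hψ : Differentiable ℂ ψ := L.differentiable.comp (differentiable_id.sub_const p)
  have hsnd : Prod.snd '' (φ ⁻¹' S) ⊆ (fun x => (L (x - p)).2) '' S := by
    rintro _ ⟨y, hy, rfl⟩
    exact ⟨φ y, hy, by simp [φ]⟩
  obtain ⟨U, hU, h0U, G, hG, hGF⟩ := exists_local_extension_at_origin (Ω := φ ⁻¹' D)
    (K := φ ⁻¹' S) (F := f ∘ φ) (hφ.continuous.continuousAt.preimage_mem_nhds (by simpa [φ]))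
    (hDS.preimage hφ.continuous) (hf.comp hφ.differentiableOn fun _ hy => hy)
    hline (subset_eq_empty (interior_mono hsnd) hproj)
  refine ⟨ψ ⁻¹' U, hU.preimage hψ.continuous, by simpa [ψ], G ∘ ψ,
    hG.comp hψ.differentiableOn fun _ hx => hx, fun x hx => ?_⟩
  have := hGF ⟨hx.1, by simpa [hφψ] using hx.2⟩
  simpa [hφψ] using this

theorem exists_differentiableOn_of_local_extensions {V E : Type*} [NormedAddCommGroup V]
    [NormedSpace ℂ V] [NormedAddCommGroup E] [NormedSpace ℂ E] {D s : Set V} {f : V → E}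
    (hD : IsOpen D) (hsD : s ⊆ D) (hDs : D ⊆ closure s)
    (hloc : ∀ p ∈ D, ∃ U, IsOpen U ∧ p ∈ U ∧ ∃ G, DifferentiableOn ℂ G U ∧ EqOn G f (U ∩ s)) :
    ∃ g, DifferentiableOn ℂ g D ∧ EqOn g f s := by
  let g := fun z => limUnder (𝓝[s] z) f
  have hg : ∀ {U G}, IsOpen U → DifferentiableOn ℂ G U → EqOn G f (U ∩ s) →
      ∀ z ∈ U ∩ D, g z = G z := by
    intro U G hU hG hGf z ⟨hzU, hzD⟩
    have : (𝓝[s] z).NeBot := mem_closure_iff_nhdsWithin_neBot.1 (hDs hzD)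
    have hGz : ContinuousAt G z := (hG.differentiableAt (hU.mem_nhds hzU)).continuousAt
    refine Tendsto.limUnder_eq ((tendsto_nhdsWithin_of_tendsto_nhds hGz.tendsto).congr' ?_)
    exact eventually_of_mem (inter_mem_nhdsWithin s (hU.mem_nhds hzU)) fun y hy => hGf ⟨hy.2, hy.1⟩
  refine ⟨g, fun p hp => ?_, fun z hz => ?_⟩
  · obtain ⟨U, hU, hpU, G, hG, hGf⟩ := hloc p hp
    refine ((hG.differentiableAt (hU.mem_nhds hpU)).congr_of_eventuallyEq ?_).differentiableWithinAt
    exact eventually_of_mem ((hU.inter hD).mem_nhds ⟨hpU, hp⟩) (hg hU hG hGf)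
  · obtain ⟨U, hU, hzU, G, hG, hGf⟩ := hloc z (hsD hz)
    exact (hg hU hG hGf z ⟨hzU, hsD hz⟩).trans (hGf ⟨hzU, hz⟩)

theorem stmt_9_general (N : ℕ) (hN : 1 ≤ N) (D : Set (EuclideanSpace ℂ (Fin N))) (hD : IsOpen D)
    (E : Set (EuclideanSpace ℂ (Fin N))) (hEclosed : closure E ∩ D ⊆ E)
    (hE : μH[2 * (N : ℝ) - 2] E = 0)
    (f : EuclideanSpace ℂ (Fin N) → ℂ) (hf : DifferentiableOn ℂ f (D \ E)) :
    ∃ g : EuclideanSpace ℂ (Fin N) → ℂ,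
      DifferentiableOn ℂ g D ∧ Set.EqOn g f (D \ E) := by
  obtain ⟨m, rfl⟩ : ∃ m, N = m + 1 := ⟨N - 1, by omega⟩
  have hE' : μH[finrank ℝ (EuclideanSpace ℂ (Fin m))] E = 0 := by
    rw [finrank_real_of_complex, finrank_euclideanSpace_fin]
    convert hE using 3
    push_cast
    ring
  have hDE : IsOpen (D \ E) := by
    convert hD.inter isClosed_closure.isOpen_compl using 1
    exact Subset.antisymm (fun x hx => ⟨hx.1, fun hxE => hx.2 (hEclosed ⟨hxE, hx.1⟩)⟩)
      fun x hx => ⟨hx.1, fun hxE => hx.2 (subset_closure hxE)⟩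
  have hEdense : Dense Eᶜ := interior_eq_empty_iff_dense_compl.1 <|
    interior_eq_empty_of_hausdorffMeasure_eq_zero (by simp [finrank_real_of_complex]) hE'
  let e : EuclideanSpace ℂ (Fin (m + 1)) ≃L[ℂ] ℂ × EuclideanSpace ℂ (Fin m) :=
    ContinuousLinearEquiv.ofFinrankEq (by simp [add_comm])
  refine exists_differentiableOn_of_local_extensions hD sdiff_subset
    (hEdense.open_subset_closure_inter hD) fun p hp => ?_
  by_cases hpE : p ∈ E
  · obtain ⟨L, hline, hproj⟩ := exists_chart_of_hausdorffMeasure_eq_zero e hE' p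
    obtain ⟨U, hU, hpU, G, hG, hGf⟩ :=
      exists_local_extension_of_chart L (hD.mem_nhds hp) hDE hf hline hproj
    exact ⟨U, hU, hpU, G, hG, hGf.mono (inter_subset_inter_right U (sdiff_subset_compl D E))⟩
  · exact ⟨D \ E, hDE, ⟨hp, hpE⟩, f, hf, fun x _ => rfl⟩

theorem stmt_9 (N : ℕ) (hN : 1 ≤ N) (D : Set (EuclideanSpace ℂ (Fin N))) (hD : IsOpen D)
    (E : Set (EuclideanSpace ℂ (Fin N))) (hED : E ⊆ D) (hEclosed : closure E ∩ D ⊆ E)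
    (hE : μH[2 * (N : ℝ) - 2] E = 0)
    (f : EuclideanSpace ℂ (Fin N) → ℂ) (hf : DifferentiableOn ℂ f (D \ E)) :
    ∃ g : EuclideanSpace ℂ (Fin N) → ℂ,
      DifferentiableOn ℂ g D ∧ Set.EqOn g f (D \ E) :=
  stmt_9_general N hN D hD E hEclosed hE f hf
end
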